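/- The Nisio semigroup S(t)u := sup_{π∈P_t} E_π u is the least upper bound of the family (S_λ)_{λ∈Λ}: (i) S_λ(t)u ≤ S(t)u pointwise for all λ, t, u; and (ii) if T = (T(t)) is any semigroup of monotone operators with S_λ(t)u ≤ T(t)u for all λ, t, u, then S(t)u ≤ T(t)u for all t, u. -/

import Mathlib

/-!
Along a partition `0 = t₀ < ⋯ < tₙ = t`, the composition `E_π u` is bounded by `T(t)u`: each
factor `E_{tᵢ₊₁ - tᵢ}` is below `T(tᵢ₊₁ - tᵢ)` because every `S_λ` is, monotonicity of `T` lets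
these bounds be composed, and the semigroup law collapses the product of the `T(tᵢ₊₁ - tᵢ)` to
`T(t)`; taking the supremum over partitions gives `S(t)u ≤ T(t)u`. For the lower bound, the
partition `{0, t}` alone contributes `E_t u = sup_λ S_λ(t)u` to the supremum defining `S(t)u`.
-/

noncomputable def applyPart {M : Type*} (E : ℝ → (M → ℝ) → (M → ℝ)) :
    List ℝ → (M → ℝ) → (M → ℝ)
  | a :: b :: rest, u => E (b - a) (applyPart E (b :: rest) u)
  | _, u => u

noncomputable def Epart {M : Type*} (E : ℝ → (M → ℝ) → (M → ℝ))
    (π : Finset ℝ) (u : M → ℝ) : M → ℝ :=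
  applyPart E (π.sort (· ≤ ·)) u

def PartsOf (t : ℝ) : Set (Finset ℝ) :=
  {π | 0 ∈ π ∧ t ∈ π ∧ ∀ s ∈ π, 0 ≤ s ∧ s ≤ t}

noncomputable def Nisio {M : Type*} (E : ℝ → (M → ℝ) → (M → ℝ))
    (t : ℝ) (u : M → ℝ) (x : M) : ℝ :=
  ⨆ π : PartsOf t, Epart E π.1 u x

section

variable {M : Type*} (E : ℝ → (M → ℝ) → (M → ℝ))

theorem Epart_singleton (s : ℝ) (u : M → ℝ) : Epart E {s} u = u := by
  simp [Epart, applyPart]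

theorem Epart_pair {s t : ℝ} (hst : s < t) (u : M → ℝ) : Epart E {s, t} u = E (t - s) u := by
  have hsort : ({s, t} : Finset ℝ).sort (· ≤ ·) = [s, t] := by
    rw [Finset.sort_insert _ (by simpa using hst.le) (by simpa using hst.ne), Finset.sort_singleton]
  simp [Epart, hsort, applyPart]

theorem pair_mem_PartsOf {t : ℝ} (ht : 0 ≤ t) : ({0, t} : Finset ℝ) ∈ PartsOf t := by
  refine ⟨by simp, by simp, ?_⟩
  simp only [Finset.mem_insert, Finset.mem_singleton, forall_eq_or_imp, forall_eq]
  exact ⟨⟨le_rfl, ht⟩, ht, le_rfl⟩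

theorem le_Nisio (S : ℝ → (M → ℝ) → (M → ℝ)) (hS0 : ∀ u, S 0 u = u)
    (hSE : ∀ h u x, S h u x ≤ E h u x) {t : ℝ} (ht : 0 ≤ t) (u : M → ℝ) (x : M)
    (hbdd : BddAbove (Set.range fun π : PartsOf t => Epart E π.1 u x)) :
    S t u x ≤ Nisio E t u x := by
  have hle : Epart E {0, t} u x ≤ Nisio E t u x := le_ciSup hbdd ⟨_, pair_mem_PartsOf ht⟩
  rcases ht.eq_or_lt with rfl | htpos
  · rw [hS0]
    simpa [Epart_singleton] using hle
  · rw [Epart_pair E htpos, sub_zero] at hle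
    exact (hSE t u x).trans hle

variable {E} {T : ℝ → (M → ℝ) → (M → ℝ)}

theorem applyPart_le (hET : ∀ h, 0 ≤ h → ∀ u x, E h u x ≤ T h u x)
    (hT0 : ∀ u, T 0 u = u)
    (hTadd : ∀ s t, 0 ≤ s → 0 ≤ t → ∀ u, T (s + t) u = T s (T t u))
    (hTmono : ∀ t, 0 ≤ t → ∀ u v : M → ℝ, (∀ x, u x ≤ v x) → ∀ x, T t u x ≤ T t v x) :
    ∀ (l : List ℝ) (hl : l ≠ []), l.Pairwise (· ≤ ·) → ∀ u x,
      applyPart E l u x ≤ T (l.getLast hl - l.head hl) u x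
  | [], hl, _ => absurd rfl hl
  | [a], _, _ => by simp [applyPart, hT0]
  | a :: b :: rest, _, hl => fun u x => by
    have hab : 0 ≤ b - a := sub_nonneg.2 (List.rel_of_pairwise_cons hl List.mem_cons_self)
    have hb : 0 ≤ (b :: rest).getLast (List.cons_ne_nil _ _) - b :=
      sub_nonneg.2 (hl.of_cons.rel_getLast List.mem_cons_self)
    calc applyPart E (a :: b :: rest) u x = E (b - a) (applyPart E (b :: rest) u) x := rfl
      _ ≤ T (b - a) (applyPart E (b :: rest) u) x := hET _ hab _ _
      _ ≤ T (b - a) (T ((b :: rest).getLast (List.cons_ne_nil _ _) - b) u) x :=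
        hTmono _ hab _ _ (applyPart_le hET hT0 hTadd hTmono _ (List.cons_ne_nil _ _) hl.of_cons u) x
      _ = T ((a :: b :: rest).getLast (List.cons_ne_nil _ _) - (a :: b :: rest).head
            (List.cons_ne_nil _ _)) u x := by
        rw [← hTadd _ _ hab hb, List.getLast_cons (List.cons_ne_nil _ _), List.head_cons]
        ring_nf

theorem Epart_le (hET : ∀ h, 0 ≤ h → ∀ u x, E h u x ≤ T h u x)
    (hT0 : ∀ u, T 0 u = u)
    (hTadd : ∀ s t, 0 ≤ s → 0 ≤ t → ∀ u, T (s + t) u = T s (T t u))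
    (hTmono : ∀ t, 0 ≤ t → ∀ u v : M → ℝ, (∀ x, u x ≤ v x) → ∀ x, T t u x ≤ T t v x)
    {t : ℝ} {π : Finset ℝ} (hπ : π ∈ PartsOf t) (u : M → ℝ) (x : M) :
    Epart E π u x ≤ T t u x := by
  obtain ⟨h0, ht, hbound⟩ := hπ
  have hsorted : (π.sort (· ≤ ·)).Pairwise (· ≤ ·) := Finset.pairwise_sort _ _
  have hne : π.sort (· ≤ ·) ≠ [] := List.ne_nil_of_mem (Finset.mem_sort _ |>.2 h0)
  have hhead : (π.sort (· ≤ ·)).head hne = 0 :=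
    le_antisymm (hsorted.rel_head (Finset.mem_sort _ |>.2 h0))
      (hbound _ (Finset.mem_sort _ |>.1 (List.head_mem hne))).1
  have hlast : (π.sort (· ≤ ·)).getLast hne = t :=
    le_antisymm (hbound _ (Finset.mem_sort _ |>.1 (List.getLast_mem hne))).2
      (hsorted.rel_getLast (Finset.mem_sort _ |>.2 ht))
  simpa [Epart, hhead, hlast] using applyPart_le hET hT0 hTadd hTmono _ hne hsorted u x

theorem Nisio_le (hET : ∀ h, 0 ≤ h → ∀ u x, E h u x ≤ T h u x)
    (hT0 : ∀ u, T 0 u = u)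
    (hTadd : ∀ s t, 0 ≤ s → 0 ≤ t → ∀ u, T (s + t) u = T s (T t u))
    (hTmono : ∀ t, 0 ≤ t → ∀ u v : M → ℝ, (∀ x, u x ≤ v x) → ∀ x, T t u x ≤ T t v x)
    {t : ℝ} (ht : 0 ≤ t) (u : M → ℝ) (x : M) :
    Nisio E t u x ≤ T t u x :=
  haveI : Nonempty (PartsOf t) := ⟨⟨_, pair_mem_PartsOf ht⟩⟩
  ciSup_le fun π => Epart_le hET hT0 hTadd hTmono π.2 u x

end

theorem stmt5_general {M Λ : Type*} [Nonempty Λ]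
    (S : Λ → ℝ → (M → ℝ) → (M → ℝ))
    (hid : ∀ l (u : M → ℝ), S l 0 u = u)
    (hbdd : ∀ h (u : M → ℝ) (x : M), BddAbove (Set.range fun l => S l h u x))
    (E : ℝ → (M → ℝ) → (M → ℝ))
    (hE : ∀ h (u : M → ℝ) (x : M), E h u x = ⨆ l, S l h u x)
    (hbddN : ∀ t (u : M → ℝ) (x : M),
      BddAbove (Set.range fun π : PartsOf t => Epart E π.1 u x)) :
    -- (i) the Nisio semigroup dominates each `S_λ`
    (∀ l t, 0 ≤ t → ∀ (u : M → ℝ) (x : M), S l t u x ≤ Nisio E t u x) ∧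
    -- (ii) it is below any semigroup of monotone operators dominating each `S_λ`
    (∀ T : ℝ → (M → ℝ) → (M → ℝ),
      (∀ u : M → ℝ, T 0 u = u) →
      (∀ s t, 0 ≤ s → 0 ≤ t → ∀ u : M → ℝ, T (s + t) u = T s (T t u)) →
      (∀ t, 0 ≤ t → ∀ u v : M → ℝ, (∀ x, u x ≤ v x) → ∀ x, T t u x ≤ T t v x) →
      (∀ l t, 0 ≤ t → ∀ (u : M → ℝ) (x : M), S l t u x ≤ T t u x) →
      ∀ t, 0 ≤ t → ∀ (u : M → ℝ) (x : M), Nisio E t u x ≤ T t u x) := by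
  refine ⟨fun l t ht u x => ?_, fun T hT0 hTadd hTmono hST t ht u x => ?_⟩
  · have hSE : ∀ h u x, S l h u x ≤ E h u x := fun h u x => hE h u x ▸ le_ciSup (hbdd h u x) l
    exact le_Nisio E (S l) (hid l) hSE ht u x (hbddN t u x)
  · have hET : ∀ h, 0 ≤ h → ∀ u x, E h u x ≤ T h u x := fun h hh u x =>
      hE h u x ▸ ciSup_le fun l => hST l h hh u x
    exact Nisio_le hET hT0 hTadd hTmono ht u x

theorem stmt5 {M Λ : Type*} [Nonempty Λ]
    (S : Λ → ℝ → (M → ℝ) → (M → ℝ))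
    (hid : ∀ l (u : M → ℝ), S l 0 u = u)
    (hsg : ∀ l s t, 0 ≤ s → 0 ≤ t → ∀ u : M → ℝ, S l (s + t) u = S l s (S l t u))
    (hadd : ∀ l h (u v : M → ℝ), S l h (u + v) = S l h u + S l h v)
    (hsmul : ∀ l h (c : ℝ) (u : M → ℝ), S l h (c • u) = c • S l h u)
    (hmono : ∀ l h, 0 ≤ h → ∀ u v : M → ℝ, (∀ x, u x ≤ v x) → ∀ x, S l h u x ≤ S l h v x)
    (hbdd : ∀ h (u : M → ℝ) (x : M), BddAbove (Set.range fun l => S l h u x))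
    (E : ℝ → (M → ℝ) → (M → ℝ))
    (hE : ∀ h (u : M → ℝ) (x : M), E h u x = ⨆ l, S l h u x)
    (hbddN : ∀ t (u : M → ℝ) (x : M),
      BddAbove (Set.range fun π : PartsOf t => Epart E π.1 u x)) :
    -- (i) the Nisio semigroup dominates each `S_λ`
    (∀ l t, 0 ≤ t → ∀ (u : M → ℝ) (x : M), S l t u x ≤ Nisio E t u x) ∧
    -- (ii) it is below any semigroup of monotone operators dominating each `S_λ`
    (∀ T : ℝ → (M → ℝ) → (M → ℝ),
      (∀ u : M → ℝ, T 0 u = u) →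
      (∀ s t, 0 ≤ s → 0 ≤ t → ∀ u : M → ℝ, T (s + t) u = T s (T t u)) →
      (∀ t, 0 ≤ t → ∀ u v : M → ℝ, (∀ x, u x ≤ v x) → ∀ x, T t u x ≤ T t v x) →
      (∀ l t, 0 ≤ t → ∀ (u : M → ℝ) (x : M), S l t u x ≤ T t u x) →
      ∀ t, 0 ≤ t → ∀ (u : M → ℝ) (x : M), Nisio E t u x ≤ T t u x) :=
  stmt5_general S hid hbdd E hE hbddN
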